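/- arXiv:2401.01509 — 3 statements merged into one kernel-verified Lean document; each statement's English description precedes it below -/
import Mathlib

section
/- For a unit vector $n\in\mathbb{R}^3$, the range of the projection $\mathscr{P}^{in}$ on $\mathbb{S}^3_0$ equals $\mathrm{Ker}\,\mathcal{H}_n := \{ n (n^\perp)^T + n^\perp n^T : n^\perp \in \mathbb{R}^3,\ n^\perp \cdot n = 0 \}$, i.e., every matrix of the form $n(n^\perp)^T + n^\perp n^T$ with $n^\perp \perp n$ is fixed by $\mathscr{P}^{in}$, and conversely every matrix in the range of $\mathscr{P}^{in}$ has this form. -/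
open Matrix BigOperators

noncomputable section

abbrev M3 := Matrix (Fin 3) (Fin 3) ℝ

def frob (A B : M3) : ℝ := ∑ i, ∑ j, A i j * B i j

def Pin (n : Fin 3 → ℝ) (Q : M3) : M3 :=
  vecMulVec n n * Q + Q * vecMulVec n n - (2 * frob Q (vecMulVec n n)) • vecMulVec n n

/-- The range of `𝒫ⁱⁿ` on `𝕊³₀` equals `Ker ℋₙ = {n(n^⊥)ᵀ + n^⊥nᵀ : n^⊥ ⊥ n}`:
every such matrix is fixed by `𝒫ⁱⁿ`, and every element of the range has this form. -/
theorem stmt2 (n : Fin 3 → ℝ) (hn : (∑ i, n i * n i) = 1) :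
    (∀ m : Fin 3 → ℝ, (∑ i, m i * n i) = 0 →
      Pin n (vecMulVec n m + vecMulVec m n) = vecMulVec n m + vecMulVec m n) ∧
    (∀ Q : M3, Qᵀ = Q → Q.trace = 0 →
      ∃ m : Fin 3 → ℝ, (∑ i, m i * n i) = 0 ∧
        Pin n Q = vecMulVec n m + vecMulVec m n) := by
  simp only [Fin.sum_univ_three] at hn
  constructor
  · intro m hm
    simp only [Fin.sum_univ_three] at hm
    ext i j
    simp only [Pin, frob, vecMulVec_apply, Matrix.sub_apply, Matrix.add_apply,
      Matrix.smul_apply, Matrix.mul_apply, Fin.sum_univ_three, smul_eq_mul]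
    linear_combination (n i * m j + m i * n j) * hn +
      (2 * n i * n j * (1 - 2 * (n 0 * n 0 + n 1 * n 1 + n 2 * n 2))) * hm
  · intro Q hQ hQt
    have hsym : ∀ a b, Q a b = Q b a := fun a b =>
      (congrFun (congrFun hQ.symm a) b).trans (Matrix.transpose_apply Q a b)
    refine ⟨fun j => (∑ k, Q j k * n k) - (frob Q (vecMulVec n n)) * n j, ?_, ?_⟩
    · simp only [frob, vecMulVec_apply, Fin.sum_univ_three]
      linear_combination (-(Q 0 0 * (n 0 * n 0) + Q 0 1 * (n 0 * n 1) + Q 0 2 * (n 0 * n 2) +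
        (Q 1 0 * (n 1 * n 0) + Q 1 1 * (n 1 * n 1) + Q 1 2 * (n 1 * n 2)) +
        (Q 2 0 * (n 2 * n 0) + Q 2 1 * (n 2 * n 1) + Q 2 2 * (n 2 * n 2)))) * hn
    · ext i j
      simp only [Pin, frob, vecMulVec_apply, Matrix.sub_apply, Matrix.add_apply,
        Matrix.smul_apply, Matrix.mul_apply, Fin.sum_univ_three, smul_eq_mul]
      linear_combination (n i * n 0) * hsym 0 j + (n i * n 1) * hsym 1 j +
        (n i * n 2) * hsym 2 j
end
end

section
/- Let $\hat\beta_1, \hat\beta_2, \hat\beta_3$ be real numbers. Then $\hat\beta_1 |nn^T : D|^2 + \hat\beta_2 |D|^2 + \hat\beta_3 |D n|^2 \geq 0$ holds for every symmetric traceless $3\times 3$ matrix $D$ and every unit vector $n \in \mathbb{R}^3$ if and only if $\hat\beta_2 \geq 0$, $2\hat\beta_2 + \hat\beta_3 \geq 0$, and $\tfrac{3}{2}\hat\beta_2 + \hat\beta_3 + \hat\beta_1 \geq 0$. -/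
/-!
Write `a = nᵀDn` and `w = Dn - a n`, so that `w ⊥ n` and `|Dn|² = a² + |w|²`. In dimension `d`,
the matrix `X = d a nnᵀ - a I + (d - 1)(nwᵀ + wnᵀ)` satisfies `⟨D, X⟩ = d a² + 2(d - 1)|w|²` and
`|X|² = (d - 1)⟨D, X⟩` for symmetric traceless `D`, so `0 ≤ |(d - 1)D - X|²` yields
`(d - 1)|D|² ≥ d a² + 2(d - 1)|w|²`, i.e. `|D|² ≥ 3/2 a² + 2|w|²` for `d = 3`. The form is therefore
at least `β₂(|D|² - 3/2 a² - 2|w|²) + (2β₂ + β₃)|w|² + (3/2 β₂ + β₃ + β₁)a²`.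
Conversely, `n = e₁` with `D = diag(0, 1, -1)`, `e₁e₂ᵀ + e₂e₁ᵀ` and `diag(1, -1/2, -1/2)` isolate
the three coefficients.
-/

open Matrix BigOperators

noncomputable section

section Frobenius

variable {ι : Type*} [Fintype ι]

def frobInner : LinearMap.BilinForm ℝ (Matrix ι ι ℝ) :=
  LinearMap.mk₂ ℝ (fun A B => ∑ i, ∑ j, A i j * B i j)
    (fun _ _ _ => by simp only [Matrix.add_apply, add_mul, Finset.sum_add_distrib])
    (fun _ _ _ => by simp only [Matrix.smul_apply, smul_eq_mul, mul_assoc, Finset.mul_sum])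
    (fun _ _ _ => by simp only [Matrix.add_apply, mul_add, Finset.sum_add_distrib])
    (fun _ _ _ => by simp only [Matrix.smul_apply, smul_eq_mul, mul_left_comm, Finset.mul_sum])

lemma frobInner_apply (A B : Matrix ι ι ℝ) : frobInner A B = ∑ i, ∑ j, A i j * B i j := rfl

lemma frobInner_comm (A B : Matrix ι ι ℝ) : frobInner A B = frobInner B A := by
  simp only [frobInner_apply, mul_comm]

lemma frobInner_self_nonneg (A : Matrix ι ι ℝ) : 0 ≤ frobInner A A :=
  Finset.sum_nonneg fun _ _ => Finset.sum_nonneg fun _ _ => mul_self_nonneg _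

lemma frobInner_vecMulVec_left (u v : ι → ℝ) (B : Matrix ι ι ℝ) :
    frobInner (vecMulVec u v) B = u ⬝ᵥ B *ᵥ v := by
  simp only [frobInner_apply, vecMulVec_apply, dotProduct, mulVec, Finset.mul_sum, mul_assoc,
    mul_comm (v _)]

lemma frobInner_one_left [DecidableEq ι] (B : Matrix ι ι ℝ) : frobInner 1 B = B.trace := by
  simp [frobInner_apply, one_apply, trace]

lemma smul_add_dotProduct_self {n w : ι → ℝ} (a : ℝ) (hn : n ⬝ᵥ n = 1) (hw : n ⬝ᵥ w = 0) :
    (a • n + w) ⬝ᵥ (a • n + w) = a ^ 2 + w ⬝ᵥ w := by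
  simp only [add_dotProduct, dotProduct_add, smul_dotProduct, dotProduct_smul, dotProduct_comm w n,
    hn, hw, smul_eq_mul]
  ring

lemma exists_eq_smul_add_orthogonal {n : ι → ℝ} (hn : n ⬝ᵥ n = 1) (v : ι → ℝ) :
    ∃ w, n ⬝ᵥ w = 0 ∧ v = (n ⬝ᵥ v) • n + w :=
  ⟨v - (n ⬝ᵥ v) • n, by rw [dotProduct_sub, dotProduct_smul, smul_eq_mul, hn, mul_one, sub_self],
    (add_sub_cancel _ _).symm⟩

lemma sq_dotProduct_le_dotProduct_self {n : ι → ℝ} (hn : n ⬝ᵥ n = 1) (v : ι → ℝ) :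
    (n ⬝ᵥ v) ^ 2 ≤ v ⬝ᵥ v := by
  obtain ⟨w, hw, hv⟩ := exists_eq_smul_add_orthogonal hn v
  have hsplit := smul_add_dotProduct_self (n ⬝ᵥ v) hn hw
  rw [← hv] at hsplit
  have hw_sq : 0 ≤ w ⬝ᵥ w := Finset.sum_nonneg fun i _ => mul_self_nonneg (w i)
  linarith

theorem card_mul_sq_add_le_frobInner_self [DecidableEq ι] {D : Matrix ι ι ℝ} (hD : Dᵀ = D)
    (htr : D.trace = 0) {n w : ι → ℝ} {a : ℝ} (hn : n ⬝ᵥ n = 1) (hw : n ⬝ᵥ w = 0)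
    (hDn : D *ᵥ n = a • n + w) (hcard : 1 < Fintype.card ι) :
    Fintype.card ι * a ^ 2 + 2 * (Fintype.card ι - 1) * (w ⬝ᵥ w) ≤
      (Fintype.card ι - 1) * frobInner D D := by
  have hd : (1 : ℝ) < Fintype.card ι := by exact_mod_cast hcard
  generalize hdef : (Fintype.card ι : ℝ) = d at hd ⊢
  have hw' : w ⬝ᵥ n = 0 := by rwa [dotProduct_comm]
  have hsymm : n ⬝ᵥ D *ᵥ w = w ⬝ᵥ D *ᵥ n := by
    rw [dotProduct_mulVec, ← mulVec_transpose, hD, dotProduct_comm]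
  set X : Matrix ι ι ℝ :=
    (d * a) • vecMulVec n n - a • 1 + (d - 1) • (vecMulVec n w + vecMulVec w n)
  have hDX : frobInner D X = d * a ^ 2 + 2 * (d - 1) * (w ⬝ᵥ w) := by
    rw [frobInner_comm]
    simp only [X, map_sub, map_add, map_smul, LinearMap.sub_apply, LinearMap.add_apply,
      LinearMap.smul_apply, frobInner_vecMulVec_left, frobInner_one_left, htr, hsymm, hDn,
      dotProduct_add, dotProduct_smul, hn, hw, hw', smul_eq_mul]
    ring
  have hXX : frobInner X X = (d - 1) * (d * a ^ 2 + 2 * (d - 1) * (w ⬝ᵥ w)) := by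
    simp only [X, map_sub, map_add, map_smul, LinearMap.sub_apply, LinearMap.add_apply,
      LinearMap.smul_apply, frobInner_one_left, trace_vecMulVec, trace_one, hdef,
      frobInner_vecMulVec_left, one_mulVec, vecMulVec_mulVec, op_smul_eq_smul, dotProduct_smul,
      hn, hw, hw', smul_eq_mul]
    ring
  have hres := frobInner_self_nonneg ((d - 1) • D - X)
  simp only [map_sub, map_smul, LinearMap.sub_apply, LinearMap.smul_apply, frobInner_comm X D,
    hDX, hXX, smul_eq_mul] at hres
  have hfactor :
      0 ≤ (d - 1) * ((d - 1) * frobInner D D - (d * a ^ 2 + 2 * (d - 1) * (w ⬝ᵥ w))) := by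
    linear_combination hres
  exact sub_nonneg.mp ((mul_nonneg_iff_of_pos_left (by linarith)).mp hfactor)

theorem two_mul_mulVec_dotProduct_self_le [DecidableEq ι] {D : Matrix ι ι ℝ} (hD : Dᵀ = D)
    (htr : D.trace = 0) {n : ι → ℝ} (hn : n ⬝ᵥ n = 1) (hcard : 1 < Fintype.card ι) :
    2 * (Fintype.card ι - 1) * ((D *ᵥ n) ⬝ᵥ (D *ᵥ n)) ≤
      (Fintype.card ι - 1) * frobInner D D + (Fintype.card ι - 2) * (n ⬝ᵥ D *ᵥ n) ^ 2 := by
  obtain ⟨w, hw, hDn⟩ := exists_eq_smul_add_orthogonal hn (D *ᵥ n)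
  have hsplit := smul_add_dotProduct_self (n ⬝ᵥ D *ᵥ n) hn hw
  rw [← hDn] at hsplit
  have hbound := card_mul_sq_add_le_frobInner_self hD htr hn hw hDn hcard
  linear_combination hbound + 2 * (Fintype.card ι - 1 : ℝ) * hsplit

end Frobenius

def testMatrix (x y z : ℝ) : M3 := !![x, y, 0; y, z, 0; 0, 0, -(x + z)]

lemma testMatrix_transpose (x y z : ℝ) : (testMatrix x y z)ᵀ = testMatrix x y z := by
  ext i j; fin_cases i <;> fin_cases j <;> rfl

lemma testMatrix_trace (x y z : ℝ) : (testMatrix x y z).trace = 0 := by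
  simp [testMatrix, trace, Fin.sum_univ_three]

lemma form_testMatrix (β1 β2 β3 x y z : ℝ) :
    β1 * frob (vecMulVec ![1, 0, 0] ![1, 0, 0]) (testMatrix x y z) ^ 2
      + β2 * frob (testMatrix x y z) (testMatrix x y z)
      + β3 * ∑ i, ((testMatrix x y z).mulVec ![1, 0, 0] i) ^ 2
      = β1 * x ^ 2 + β2 * (x ^ 2 + 2 * y ^ 2 + z ^ 2 + (x + z) ^ 2) + β3 * (x ^ 2 + y ^ 2) := by
  simp [frob, testMatrix, vecMulVec_apply, mulVec, dotProduct, Fin.sum_univ_three,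
    -mul_eq_mul_left_iff]
  ring

/-- The dissipation relation `β̂₁|nnᵀ:D|² + β̂₂|D|² + β̂₃|Dn|² ≥ 0` holds for all
symmetric traceless `D` and unit vectors `n` iff
`β̂₂ ≥ 0`, `2β̂₂ + β̂₃ ≥ 0`, `(3/2)β̂₂ + β̂₃ + β̂₁ ≥ 0`. -/
theorem stmt7 (β1 β2 β3 : ℝ) :
    (∀ D : M3, Dᵀ = D → D.trace = 0 → ∀ n : Fin 3 → ℝ, (∑ i, n i * n i) = 1 →
      0 ≤ β1 * (frob (vecMulVec n n) D) ^ 2 + β2 * frob D D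
        + β3 * (∑ i, (D.mulVec n i) ^ 2)) ↔
    (0 ≤ β2 ∧ 0 ≤ 2 * β2 + β3 ∧ 0 ≤ 3/2 * β2 + β3 + β1) := by
  constructor
  · intro h
    have hwitness (x y z : ℝ) :
        0 ≤ β1 * x ^ 2 + β2 * (x ^ 2 + 2 * y ^ 2 + z ^ 2 + (x + z) ^ 2) + β3 * (x ^ 2 + y ^ 2) := by
      rw [← form_testMatrix]
      exact h _ (testMatrix_transpose x y z) (testMatrix_trace x y z) _
        (by simp [Fin.sum_univ_three])
    exact ⟨by linarith [hwitness 0 0 1], by linarith [hwitness 0 1 0],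
      by linarith [hwitness 1 0 (-1 / 2)]⟩
  · rintro ⟨h2, h23, h1⟩ D hD htr n hn
    replace hn : n ⬝ᵥ n = 1 := hn
    have hnormal : frob (vecMulVec n n) D = n ⬝ᵥ D *ᵥ n := frobInner_vecMulVec_left n n D
    have hsq : ∑ i, (D *ᵥ n) i ^ 2 = (D *ᵥ n) ⬝ᵥ (D *ᵥ n) := by simp only [dotProduct, sq]
    have hcs := sq_dotProduct_le_dotProduct_self hn (D *ᵥ n)
    have hbound := two_mul_mulVec_dotProduct_self_le hD htr hn (by simp)
    norm_num at hbound
    change _ ≤ 2 * frob D D + _ at hbound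
    rw [hnormal, hsq]
    linarith [mul_nonneg h2 (sub_nonneg.2 hbound), mul_nonneg h23 (sub_nonneg.2 hcs),
      mul_nonneg h1 (sq_nonneg (n ⬝ᵥ D *ᵥ n))]
end
end

section
/- Let $\mu_1 > 0$, $\beta_1 \geq 0$, $\beta_7 \geq 0$, $\beta_4 - \tfrac{\mu_2^2}{4\mu_1} > 0$, and suppose either ($\beta_7 \neq 0$ and $(\beta_5 + \beta_6)^2 < 8\beta_7(\beta_4 - \tfrac{\mu_2^2}{4\mu_1})$) or ($\beta_7 = 0$ and $\beta_5 + \beta_6 = 0$). Then for every symmetric traceless $3\times 3$ matrix $D$, unit vector $n$, and $s \in \mathbb{R}$, with $Q_0 = s(nn^T - \tfrac13 I)$: $\beta_1 (Q_0 : D)^2 + (\beta_4 - \tfrac{\mu_2^2}{4\mu_1})|D|^2 + (\beta_5+\beta_6)\,(D Q_0) : D + 2\beta_7 |D Q_0|^2 \geq 0$. -/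
open Matrix BigOperators

noncomputable section

lemma frob_self_nonneg (A : M3) : 0 ≤ frob A A := by
  unfold frob
  apply Finset.sum_nonneg; intro i _
  apply Finset.sum_nonneg; intro j _
  exact mul_self_nonneg _

lemma frob_cs (A B : M3) : (frob A B) ^ 2 ≤ frob A A * frob B B := by
  unfold frob
  have h1 : ∀ (C E : M3), (∑ i, ∑ j, C i j * E i j)
      = ∑ p : Fin 3 × Fin 3, C p.1 p.2 * E p.1 p.2 := by
    intro C E; rw [Fintype.sum_prod_type]
  rw [h1 A B, h1 A A, h1 B B]
  have := Finset.sum_mul_sq_le_sq_mul_sq Finset.univ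
    (fun p : Fin 3 × Fin 3 => A p.1 p.2) (fun p : Fin 3 × Fin 3 => B p.1 p.2)
  simpa [sq] using this

lemma scalar_key (c b a d t β7 : ℝ) (hc : 0 < c) (hβ7 : 0 ≤ β7)
    (ha0 : 0 ≤ a) (hd0 : 0 ≤ d) (hcs : t ^ 2 ≤ a * d)
    (hcase : (β7 ≠ 0 ∧ b ^ 2 < 8 * β7 * c) ∨ (β7 = 0 ∧ b = 0)) :
    0 ≤ c * d + b * t + 2 * β7 * a := by
  rcases hcase with ⟨hβ7ne, hlt⟩ | ⟨hz, hbz⟩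
  · have hβ7pos : 0 < β7 := lt_of_le_of_ne hβ7 (Ne.symm hβ7ne)
    rcases eq_or_ne t 0 with ht0 | ht0
    · rw [ht0]
      have : 0 ≤ c * d := mul_nonneg hc.le hd0
      nlinarith
    · have ht2 : 0 < t ^ 2 := by positivity
      have e1 : b ^ 2 * t ^ 2 < 8 * β7 * c * t ^ 2 := by nlinarith
      have e2 : 8 * β7 * c * t ^ 2 ≤ 8 * β7 * c * (a * d) := by
        have := mul_pos hβ7pos hc
        nlinarith
      have e3 : 8 * β7 * c * (a * d) ≤ (c * d + 2 * β7 * a) ^ 2 := by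
        nlinarith [sq_nonneg (c * d - 2 * β7 * a)]
      have e4 : (b * t) ^ 2 < (c * d + 2 * β7 * a) ^ 2 := by nlinarith
      have e5 : 0 ≤ c * d + 2 * β7 * a := by
        have := mul_nonneg hc.le hd0
        have := mul_nonneg hβ7 ha0
        linarith
      nlinarith [e4, e5]
  · rw [hz, hbz]
    have : 0 ≤ c * d := mul_nonneg hc.le hd0
    linarith

/-- Pointwise dissipation positivity underlying the Qian–Sheng energy law:
`β₁(Q₀:D)² + (β₄ - μ₂²/(4μ₁))|D|² + (β₅+β₆)(DQ₀):D + 2β₇|DQ₀|² ≥ 0`. -/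
theorem stmt18 (μ1 μ2 β1 β4 β5 β6 β7 : ℝ)
    (hμ1 : 0 < μ1) (hβ1 : 0 ≤ β1) (hβ7 : 0 ≤ β7)
    (hβ4 : 0 < β4 - μ2 ^ 2 / (4 * μ1))
    (hcase : (β7 ≠ 0 ∧ (β5 + β6) ^ 2 < 8 * β7 * (β4 - μ2 ^ 2 / (4 * μ1)))
      ∨ (β7 = 0 ∧ β5 + β6 = 0))
    (D : M3) (hsym : Dᵀ = D) (htr : D.trace = 0)
    (n : Fin 3 → ℝ) (hn : (∑ i, n i * n i) = 1) (s : ℝ)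
    (Q0 : M3) (hQ0 : Q0 = s • (vecMulVec n n - (1/3 : ℝ) • (1 : M3))) :
    0 ≤ β1 * (frob Q0 D) ^ 2 + (β4 - μ2 ^ 2 / (4 * μ1)) * frob D D
      + (β5 + β6) * frob (D * Q0) D + 2 * β7 * frob (D * Q0) (D * Q0) := by
  have ha0 := frob_self_nonneg (D * Q0)
  have hd0 := frob_self_nonneg D
  have hcs := frob_cs (D * Q0) D
  have h1 : 0 ≤ β1 * (frob Q0 D) ^ 2 := mul_nonneg hβ1 (sq_nonneg _)
  have h2 := scalar_key (β4 - μ2 ^ 2 / (4 * μ1)) (β5 + β6)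
    (frob (D * Q0) (D * Q0)) (frob D D) (frob (D * Q0) D) β7
    hβ4 hβ7 ha0 hd0 hcs hcase
  linarith
end
end
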